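/- arXiv:2502.18257 — 5 statements merged into one kernel-verified Lean document; each statement's English description precedes it below -/
import Mathlib

section
/- Let R be a Dedekind domain. Every finitely generated projective R-module is isomorphic to R^n ⊕ I for some n ≥ 0 and some ideal I of R. -/
/-!
A nontrivial finitely generated projective module `M` has a linear form `φ` with nonzero image,
a nonzero ideal `I`. Ideals of a Dedekind domain are invertible, hence projective, so
`M ≃ ker φ × I`, and by induction on the rank `ker φ ≃ Rⁿ × J`. It remains to rewrite `J × I`:
if `J ≠ 0`, move `J` inside its ideal class to an ideal `C` coprime to `I`; then the sum map
`C × I → R` is surjective with kernel `C ⊓ I`, so `J × I ≃ (C ⊓ I) × R`.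
-/

open scoped nonZeroDivisors

theorem Function.Exact.nonempty_linearEquiv_prod {R M N P : Type*} [Ring R]
    [AddCommGroup M] [AddCommGroup N] [AddCommGroup P] [Module R M] [Module R N] [Module R P]
    [Module.Projective R P] {f : M →ₗ[R] N} {g : N →ₗ[R] P} (h : Function.Exact f g)
    (hf : Function.Injective f) (hg : Function.Surjective g) : Nonempty (N ≃ₗ[R] M × P) :=
  let ⟨l, hl⟩ := Module.projective_lifting_property g LinearMap.id hg
  ⟨(h.splitSurjectiveEquiv hf ⟨l, hl⟩).1⟩

theorem Module.Projective.of_prod_left {R M N : Type*} [Ring R] [AddCommGroup M] [Module R M]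
    [AddCommGroup N] [Module R N] [Module.Projective R (M × N)] : Module.Projective R M :=
  .of_split (LinearMap.inl R M N) (LinearMap.fst R M N) (LinearMap.fst_comp_inl R M N)

namespace LinearMap

theorem nonempty_linearEquiv_ker_prod_range {R M P : Type*} [Ring R]
    [AddCommGroup M] [Module R M] [AddCommGroup P] [Module R P] (f : M →ₗ[R] P)
    [Module.Projective R (range f)] : Nonempty (M ≃ₗ[R] ker f × range f) := by
  rw [← f.ker_rangeRestrict]
  exact (exact_subtype_ker_map _).nonempty_linearEquiv_prod (Submodule.injective_subtype _)
    f.surjective_rangeRestrict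

theorem finrank_ker_lt_finrank {R M N : Type*} [CommRing R] [IsDomain R]
    [AddCommGroup M] [Module R M] [Module.Finite R M] [AddCommGroup N] [Module R N]
    [Module.IsTorsionFree R N] {f : M →ₗ[R] N} (hf : f ≠ 0) :
    Module.finrank R (ker f) < Module.finrank R M := by
  have : Nontrivial (range f) := Submodule.nontrivial_iff_ne_bot.mpr (range_eq_bot.not.mpr hf)
  have hpos : 0 < Module.finrank R (range f) := Module.finrank_pos
  have := (ker f).finrank_quotient_add_finrank
  rw [f.quotKerEquivRange.finrank_eq] at this
  omega

end LinearMap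

namespace Ideal

section CommRing

variable {R : Type*} [CommRing R]

theorem nonempty_prod_linearEquiv_of_sup_eq_top {I J : Ideal R} (h : I ⊔ J = ⊤) :
    Nonempty ((I × J) ≃ₗ[R] ↥(I ⊓ J) × R) := by
  let f : ↥(I ⊓ J) →ₗ[R] I × J :=
    (Submodule.inclusion inf_le_left).prod (-Submodule.inclusion inf_le_right)
  let g : (I × J) →ₗ[R] R := I.subtype.coprod J.subtype
  refine Function.Exact.nonempty_linearEquiv_prod (f := f) (g := g) ?_ ?_ ?_
  · rintro ⟨⟨x, hx⟩, ⟨y, hy⟩⟩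
    simp only [g, f, LinearMap.coprod_apply, Submodule.subtype_apply, Set.mem_range]
    constructor
    · intro hxy
      obtain rfl : y = -x := eq_neg_of_add_eq_zero_right hxy
      exact ⟨⟨x, hx, neg_mem_iff.mp hy⟩, rfl⟩
    · rintro ⟨z, hz⟩
      simp only [Prod.ext_iff, Subtype.ext_iff] at hz
      simp [← hz.1, ← hz.2]
  · intro z w hzw
    exact Subtype.ext (congrArg (fun p => (p.1 : R)) hzw)
  · intro r
    obtain ⟨x, hx, y, hy, hxy⟩ := Submodule.mem_sup.mp (h ▸ Submodule.mem_top : r ∈ I ⊔ J)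
    exact ⟨(⟨x, hx⟩, ⟨y, hy⟩), hxy⟩

noncomputable def equivSpanSingletonMul [IsDomain R] {x : R} (hx : x ≠ 0) (I : Ideal R) :
    I ≃ₗ[R] ↥(span {x} * I) :=
  (Submodule.equivMapOfInjective _ (mul_right_injective₀ hx) I).trans
    (.ofEq _ _ Submodule.span_singleton_mul.symm)

end CommRing

variable {R : Type*} [CommRing R] [IsDedekindDomain R]

instance projective_of_isDedekindDomain (I : Ideal R) : Module.Projective R I := by
  rcases eq_or_ne I ⊥ with rfl | hI
  · exact Module.Projective.of_free
  let K := FractionRing R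
  have hunit : IsUnit ((I : FractionalIdeal R⁰ K) : Submodule R K) :=
    (isUnit_iff_ne_zero.mpr (FractionalIdeal.coeIdeal_ne_zero.mpr hI)).map
      (FractionalIdeal.coeSubmoduleHom R⁰ K)
  rw [FractionalIdeal.coe_coeIdeal, IsLocalization.coeSubmodule] at hunit
  have := Submodule.projective_of_isUnit hunit
  exact .of_equiv
    (I.equivMapOfInjective (Algebra.linearMap R K) (IsFractionRing.injective R K)).symm

theorem exists_mul_eq_span_singleton_sup_eq_top {I J : Ideal R} (hJ : J ≠ ⊥) (hI : I ≠ ⊥)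
    (hI' : I ≠ ⊤) : ∃ a ≠ 0, ∃ K : Ideal R, J * K = span {a} ∧ K ⊔ I = ⊤ := by
  obtain ⟨a, ha⟩ := IsDedekindDomain.exists_sup_span_eq (mul_le_left : J * I ≤ J)
    (mul_ne_zero hJ hI)
  obtain ⟨K, hK⟩ := dvd_iff_le.mpr (ha ▸ le_sup_right : span {a} ≤ J)
  have hKI : K ⊔ I = ⊤ := by
    refine mul_left_cancel₀ hJ ?_
    rw [mul_sup, ← hK, sup_comm, ha, mul_top]
  refine ⟨a, ?_, K, hK.symm, hKI⟩
  rintro rfl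
  obtain rfl : K = ⊥ :=
    (mul_eq_bot.mp (hK.symm.trans (span_singleton_eq_bot.mpr rfl))).resolve_left hJ
  exact hI' (by rwa [bot_sup_eq] at hKI)

theorem exists_sup_eq_top_nonempty_linearEquiv {I J : Ideal R} (hJ : J ≠ ⊥) (hI : I ≠ ⊥) :
    ∃ C : Ideal R, C ⊔ I = ⊤ ∧ Nonempty (J ≃ₗ[R] C) := by
  rcases eq_or_ne I ⊤ with rfl | hI'
  · exact ⟨J, sup_top_eq J, ⟨.refl R J⟩⟩
  obtain ⟨a, ha, K, hK, -⟩ := exists_mul_eq_span_singleton_sup_eq_top hJ hI hI'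
  have hK0 : K ≠ ⊥ := by
    rintro rfl
    exact ha (span_singleton_eq_bot.mp (by rw [← hK, mul_bot]))
  obtain ⟨b, hb, C, hC, hCI⟩ := exists_mul_eq_span_singleton_sup_eq_top hK0 hI hI'
  -- `J * K` and `K * C` are principal, so `C` lies in the ideal class of `J`.
  have hbJ : span {b} * J = span {a} * C := by rw [← hK, ← hC]; ring
  exact ⟨C, hCI, ⟨(equivSpanSingletonMul hb J).trans
    ((LinearEquiv.ofEq _ _ hbJ).trans (equivSpanSingletonMul ha C).symm)⟩⟩

theorem exists_prod_linearEquiv_pi_prod (J : Ideal R) {I : Ideal R} (hI : I ≠ ⊥) :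
    ∃ (m : ℕ) (C : Ideal R), Nonempty ((J × I) ≃ₗ[R] (Fin m → R) × C) := by
  rcases eq_or_ne J ⊥ with rfl | hJ
  · exact ⟨0, I, ⟨LinearEquiv.uniqueProd.trans LinearEquiv.uniqueProd.symm⟩⟩
  obtain ⟨C, hCI, ⟨e⟩⟩ := exists_sup_eq_top_nonempty_linearEquiv hJ hI
  obtain ⟨e'⟩ := nonempty_prod_linearEquiv_of_sup_eq_top hCI
  exact ⟨1, C ⊓ I, ⟨e.prodCongr (.refl R I) ≪≫ₗ e' ≪≫ₗ LinearEquiv.prodComm R _ _ ≪≫ₗ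
    (LinearEquiv.funUnique (Fin 1) R R).symm.prodCongr (.refl R _)⟩⟩

end Ideal

/-- Every finitely generated projective module over a Dedekind domain is isomorphic to
`R^n ⊕ I` for some `n ≥ 0` and some ideal `I` of `R`. -/
theorem stmt_2 (R : Type*) [CommRing R] [IsDedekindDomain R]
    (M : Type*) [AddCommGroup M] [Module R M]
    [Module.Finite R M] [Module.Projective R M] :
    ∃ (n : ℕ) (I : Ideal R), Nonempty (M ≃ₗ[R] ((Fin n → R) × I)) := by
  induction hr : Module.finrank R M using Nat.strong_induction_on generalizing M with
  | _ r ih =>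
  cases subsingleton_or_nontrivial M
  · exact ⟨0, ⊥, ⟨.ofSubsingleton _ _⟩⟩
  obtain ⟨m, hm⟩ := exists_ne (0 : M)
  obtain ⟨φ, hφ⟩ : ∃ φ : Module.Dual R M, φ m ≠ 0 := by
    simpa using (Module.forall_dual_apply_eq_zero_iff R m).not.mpr hm
  have hφ0 : φ ≠ 0 := fun h => hφ (by simp [h])
  obtain ⟨e⟩ := φ.nonempty_linearEquiv_ker_prod_range
  have : Module.Projective R (LinearMap.ker φ × LinearMap.range φ) := .of_equiv e
  have : Module.Projective R (LinearMap.ker φ) := .of_prod_left (N := LinearMap.range φ)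
  obtain ⟨n, J, ⟨eK⟩⟩ := ih _ (hr ▸ LinearMap.finrank_ker_lt_finrank hφ0) (LinearMap.ker φ) rfl
  obtain ⟨k, C, ⟨eJ⟩⟩ :=
    J.exists_prod_linearEquiv_pi_prod (LinearMap.range_eq_bot.not.mpr hφ0)
  let eR : ((Fin n → R) × (Fin k → R)) ≃ₗ[R] (Fin (n + k) → R) :=
    (LinearEquiv.sumArrowLequivProdArrow _ _ R R).symm ≪≫ₗ
      LinearEquiv.funCongrLeft R R finSumFinEquiv.symm
  exact ⟨n + k, C, ⟨e ≪≫ₗ eK.prodCongr (.refl R _) ≪≫ₗ LinearEquiv.prodAssoc R _ _ _ ≪≫ₗ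
    (LinearEquiv.refl R _).prodCongr eJ ≪≫ₗ (LinearEquiv.prodAssoc R _ _ _).symm ≪≫ₗ
    eR.prodCongr (.refl R C)⟩⟩
end

section
/- Let (A, ⊗, 1) be a tensor extriangulated category whose radical thick tensor ideals form a set Rad(A). Then Rad(A), ordered by inclusion, is a frame: arbitrary joins exist (given by the radical closure of the union), finite meets are intersections, and the infinite join-distributivity law I ∧ ⋁ S = ⋁_{J ∈ S} (I ∧ J) holds. -/
/-! Abstract setting for a tensor extriangulated category, at the level of
isomorphism classes of objects: the classes form a commutative monoid `C` under `⊗`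
(with unit `1`), there is a zero object `zero`, a ternary relation `Tri X Y Z`
recording the extriangles `X → Y → Z ⤳`, and a relation `Summand X Y` recording
that `X` is a direct summand of `Y`. -/

/-- A thick tensor ideal: a set of (iso-classes of) objects containing `0`, closed under
tensoring with arbitrary objects, under direct summands, and satisfying the 2-out-of-3
property with respect to extriangles. -/
structure ThickTensorIdeal (C : Type*) [CommMonoid C] (zero : C)
    (Tri : C → C → C → Prop) (Summand : C → C → Prop) where
  carrier : Set C
  zero_mem : zero ∈ carrier
  tensor_mem : ∀ (a : C) {x : C}, x ∈ carrier → a * x ∈ carrier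
  summand_mem : ∀ {x y : C}, Summand x y → y ∈ carrier → x ∈ carrier
  ext₃ : ∀ {X Y Z : C}, Tri X Y Z → X ∈ carrier → Y ∈ carrier → Z ∈ carrier
  ext₂ : ∀ {X Y Z : C}, Tri X Y Z → X ∈ carrier → Z ∈ carrier → Y ∈ carrier
  ext₁ : ∀ {X Y Z : C}, Tri X Y Z → Y ∈ carrier → Z ∈ carrier → X ∈ carrier

/-- A radical thick tensor ideal: a thick tensor ideal `I` such that `X^{⊗n} ∈ I` for
some `n ≥ 1` implies `X ∈ I`. -/
structure RadicalThickTensorIdeal (C : Type*) [CommMonoid C] (zero : C)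
    (Tri : C → C → C → Prop) (Summand : C → C → Prop) extends
    ThickTensorIdeal C zero Tri Summand where
  radical : ∀ {x : C} {n : ℕ}, 1 ≤ n → x ^ n ∈ carrier → x ∈ carrier

/-- The radical closure `rad(s)` of a set of objects: the intersection of the carriers of
all radical thick tensor ideals containing `s`. -/
def radClosure {C : Type*} [CommMonoid C] (zero : C)
    (Tri : C → C → C → Prop) (Summand : C → C → Prop) (s : Set C) : Set C :=
  ⋂₀ {t : Set C | (∃ I : RadicalThickTensorIdeal C zero Tri Summand, I.carrier = t) ∧ s ⊆ t}

section Aux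

variable {C : Type*} [CommMonoid C] {zero : C} {Tri : C → C → C → Prop}
  {Summand : C → C → Prop}

lemma subset_radClosure (s : Set C) : s ⊆ radClosure zero Tri Summand s :=
  fun _ hx _ ht => ht.2 hx

lemma radClosure_subset {s : Set C} (J : RadicalThickTensorIdeal C zero Tri Summand)
    (h : s ⊆ J.carrier) : radClosure zero Tri Summand s ⊆ J.carrier :=
  Set.sInter_subset_of_mem ⟨⟨J, rfl⟩, h⟩

/-- The radical closure is itself a radical thick tensor ideal. -/
def radClosureIdeal (zero : C) (Tri : C → C → C → Prop) (Summand : C → C → Prop)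
    (s : Set C) : RadicalThickTensorIdeal C zero Tri Summand where
  carrier := radClosure zero Tri Summand s
  zero_mem := by
    rintro t ⟨⟨I, rfl⟩, hs⟩; exact I.zero_mem
  tensor_mem := by
    rintro a x hx t ⟨⟨I, rfl⟩, hs⟩
    exact I.tensor_mem a (hx _ ⟨⟨I, rfl⟩, hs⟩)
  summand_mem := by
    rintro x y hxy hy t ⟨⟨I, rfl⟩, hs⟩
    exact I.summand_mem hxy (hy _ ⟨⟨I, rfl⟩, hs⟩)
  ext₃ := by
    rintro X Y Z hT hX hY t ⟨⟨I, rfl⟩, hs⟩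
    exact I.ext₃ hT (hX _ ⟨⟨I, rfl⟩, hs⟩) (hY _ ⟨⟨I, rfl⟩, hs⟩)
  ext₂ := by
    rintro X Y Z hT hX hZ t ⟨⟨I, rfl⟩, hs⟩
    exact I.ext₂ hT (hX _ ⟨⟨I, rfl⟩, hs⟩) (hZ _ ⟨⟨I, rfl⟩, hs⟩)
  ext₁ := by
    rintro X Y Z hT hY hZ t ⟨⟨I, rfl⟩, hs⟩
    exact I.ext₁ hT (hY _ ⟨⟨I, rfl⟩, hs⟩) (hZ _ ⟨⟨I, rfl⟩, hs⟩)
  radical := by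
    rintro x n hn hx t ⟨⟨I, rfl⟩, hs⟩
    exact I.radical hn (hx _ ⟨⟨I, rfl⟩, hs⟩)

/-- Intersection of two radical thick tensor ideals. -/
def interIdeal (I J : RadicalThickTensorIdeal C zero Tri Summand) :
    RadicalThickTensorIdeal C zero Tri Summand where
  carrier := I.carrier ∩ J.carrier
  zero_mem := ⟨I.zero_mem, J.zero_mem⟩
  tensor_mem := fun a _ hx => ⟨I.tensor_mem a hx.1, J.tensor_mem a hx.2⟩
  summand_mem := fun h hy => ⟨I.summand_mem h hy.1, J.summand_mem h hy.2⟩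
  ext₃ := fun hT hX hY => ⟨I.ext₃ hT hX.1 hY.1, J.ext₃ hT hX.2 hY.2⟩
  ext₂ := fun hT hX hZ => ⟨I.ext₂ hT hX.1 hZ.1, J.ext₂ hT hX.2 hZ.2⟩
  ext₁ := fun hT hY hZ => ⟨I.ext₁ hT hY.1 hZ.1, J.ext₁ hT hY.2 hZ.2⟩
  radical := fun hn hx => ⟨I.radical hn hx.1, J.radical hn hx.2⟩

/-- The "transporter" ideal used in the distributivity proof. -/
def transporterIdeal (zero : C) (Tri : C → C → C → Prop) (Summand : C → C → Prop)
    (tensor_zero : ∀ a : C, a * zero = zero)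
    (tri_tensor : ∀ (a : C) {X Y Z : C}, Tri X Y Z → Tri (a * X) (a * Y) (a * Z))
    (summand_tensor : ∀ (a : C) {X Y : C}, Summand X Y → Summand (a * X) (a * Y))
    (I : RadicalThickTensorIdeal C zero Tri Summand) (u : Set C) :
    RadicalThickTensorIdeal C zero Tri Summand where
  carrier := {x : C | ∀ y ∈ I.carrier, x * y ∈ radClosure zero Tri Summand u}
  zero_mem := by
    intro y hy
    have : zero * y = zero := by rw [mul_comm]; exact tensor_zero y
    rw [this]
    exact (radClosureIdeal zero Tri Summand u).zero_mem
  tensor_mem := by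
    intro a x hx y hy
    have : a * x * y = a * (x * y) := mul_assoc a x y
    rw [this]
    exact (radClosureIdeal zero Tri Summand u).tensor_mem a (hx y hy)
  summand_mem := by
    intro x x' hxx' hx' y hy
    have h : Summand (y * x) (y * x') := summand_tensor y hxx'
    rw [mul_comm y x, mul_comm y x'] at h
    exact (radClosureIdeal zero Tri Summand u).summand_mem h (hx' y hy)
  ext₃ := by
    intro X Y Z hT hX hY y hy
    have h := tri_tensor y hT
    rw [mul_comm y X, mul_comm y Y, mul_comm y Z] at h
    exact (radClosureIdeal zero Tri Summand u).ext₃ h (hX y hy) (hY y hy)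
  ext₂ := by
    intro X Y Z hT hX hZ y hy
    have h := tri_tensor y hT
    rw [mul_comm y X, mul_comm y Y, mul_comm y Z] at h
    exact (radClosureIdeal zero Tri Summand u).ext₂ h (hX y hy) (hZ y hy)
  ext₁ := by
    intro X Y Z hT hY hZ y hy
    have h := tri_tensor y hT
    rw [mul_comm y X, mul_comm y Y, mul_comm y Z] at h
    exact (radClosureIdeal zero Tri Summand u).ext₁ h (hY y hy) (hZ y hy)
  radical := by
    intro x n hn hx y hy
    have hxy : x ^ n * y ∈ radClosure zero Tri Summand u := hx y hy
    have h2 : (x * y) ^ n ∈ radClosure zero Tri Summand u := by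
      have : (x * y) ^ n = y ^ (n - 1) * (x ^ n * y) := by
        rw [mul_pow]
        have : y ^ n = y ^ (n - 1) * y := by
          conv_lhs => rw [← Nat.sub_add_cancel hn]
          rw [pow_succ]
        rw [this, mul_left_comm]
      rw [this]
      exact (radClosureIdeal zero Tri Summand u).tensor_mem _ hxy
    exact (radClosureIdeal zero Tri Summand u).radical hn h2

end Aux

/-- `Rad(A)` is a frame: the radical closure of any set is again a radical thick tensor
ideal and is the least one containing the set (so arbitrary joins exist, given by the
radical closure of the union), binary meets are intersections, and the infinite
join-distributivity law `I ∧ ⋁ S = ⋁_{J ∈ S} (I ∧ J)` holds. -/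
theorem stmt_4 {C : Type*} [CommMonoid C] (zero : C)
    (Tri : C → C → C → Prop) (Summand : C → C → Prop)
    (tensor_zero : ∀ a : C, a * zero = zero)
    (tri_tensor : ∀ (a : C) {X Y Z : C}, Tri X Y Z → Tri (a * X) (a * Y) (a * Z))
    (summand_tensor : ∀ (a : C) {X Y : C}, Summand X Y → Summand (a * X) (a * Y)) :
    (∀ s : Set C, ∃ J : RadicalThickTensorIdeal C zero Tri Summand,
        J.carrier = radClosure zero Tri Summand s) ∧
    (∀ (s : Set C) (J : RadicalThickTensorIdeal C zero Tri Summand),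
        s ⊆ J.carrier → radClosure zero Tri Summand s ⊆ J.carrier) ∧
    (∀ I J : RadicalThickTensorIdeal C zero Tri Summand,
        ∃ K : RadicalThickTensorIdeal C zero Tri Summand,
          K.carrier = I.carrier ∩ J.carrier) ∧
    (∀ (I : RadicalThickTensorIdeal C zero Tri Summand)
        (S : Set (RadicalThickTensorIdeal C zero Tri Summand)),
        I.carrier ∩ radClosure zero Tri Summand (⋃ J ∈ S, J.carrier) =
          radClosure zero Tri Summand (⋃ J ∈ S, I.carrier ∩ J.carrier)) := by
  refine ⟨fun s => ⟨radClosureIdeal zero Tri Summand s, rfl⟩,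
    fun s J h => radClosure_subset J h,
    fun I J => ⟨interIdeal I J, rfl⟩, fun I S => ?_⟩
  apply Set.Subset.antisymm
  · rintro x ⟨hxI, hxR⟩
    set K := transporterIdeal zero Tri Summand tensor_zero tri_tensor summand_tensor I
      (⋃ J ∈ S, I.carrier ∩ J.carrier) with hK
    have hsub : (⋃ J ∈ S, J.carrier) ⊆ K.carrier := by
      rintro z hz y hy
      simp only [Set.mem_iUnion] at hz
      obtain ⟨J, hJ, hzJ⟩ := hz
      apply subset_radClosure
      simp only [Set.mem_iUnion]
      refine ⟨J, hJ, ?_⟩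
      have h1 : z * y ∈ I.carrier := I.tensor_mem z hy
      have h2 : z * y ∈ J.carrier := by rw [mul_comm]; exact J.tensor_mem y hzJ
      exact ⟨h1, h2⟩
    have hxK : x ∈ K.carrier := radClosure_subset K hsub hxR
    have hxx : x * x ∈ radClosure zero Tri Summand (⋃ J ∈ S, I.carrier ∩ J.carrier) :=
      hxK x hxI
    have : x ^ 2 ∈ radClosure zero Tri Summand (⋃ J ∈ S, I.carrier ∩ J.carrier) := by
      rwa [pow_two]
    exact (radClosureIdeal zero Tri Summand _).radical (by norm_num) this
  · apply radClosure_subset (interIdeal I (radClosureIdeal zero Tri Summand (⋃ J ∈ S, J.carrier)))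
    rintro z hz
    simp only [Set.mem_iUnion] at hz
    obtain ⟨J, hJ, hzI, hzJ⟩ := hz
    refine ⟨hzI, subset_radClosure _ ?_⟩
    simp only [Set.mem_iUnion]
    exact ⟨J, hJ, hzJ⟩
end

section
/- Let (F, β): S → T be an extriangulated functor between triangulated categories (viewed as extriangulated categories via 𝔼(Y,X) = Hom(Y, ΣX)). Define τ_X := β_{ΣX,X}(id_{ΣX}): F(ΣX) → ΣF(X). Then τ is a natural isomorphism and (F, τ) is a triangulated functor, i.e., F sends exact triangles X → W → Y → ΣX to exact triangles F(X) → F(W) → F(Y) → ΣF(X) (with connecting map τ_X ∘ F(h)). -/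
open CategoryTheory Category Limits Pretriangulated

/-!
Naturality of `β` in the contravariant variable, applied to `d ≫ 𝟙_{X⟦1⟧}`, gives
`β d = F(d) ≫ τ_X`, so `β` is determined by `τ`; computing `β(f⟦1⟧)` through either variable
makes `τ` natural. Applying `(F, β)` to the contractible triangle `X → 0 → X⟦1⟧ = X⟦1⟧`
yields a distinguished triangle whose middle object `F(0)` is zero, so its third morphism `τ_X`
is an isomorphism.
-/

section Naturality

variable {S T : Type*} [Category S] [Category T] [HasShift S ℤ] [HasShift T ℤ] (F : S ⥤ T)
  (β : ∀ (X Y : S), (Y ⟶ X⟦(1 : ℤ)⟧) → (F.obj Y ⟶ (F.obj X)⟦(1 : ℤ)⟧))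
  (hnat : ∀ (X X' Y' Y : S) (f : X ⟶ X') (g : Y' ⟶ Y) (d : Y ⟶ X⟦(1 : ℤ)⟧),
    β X' Y' (g ≫ d ≫ f⟦(1 : ℤ)⟧') = F.map g ≫ β X Y d ≫ (F.map f)⟦(1 : ℤ)⟧')
include hnat

lemma eq_map_comp_apply_id_of_naturality {X Y : S} (d : Y ⟶ X⟦(1 : ℤ)⟧) :
    β X Y d = F.map d ≫ β X (X⟦(1 : ℤ)⟧) (𝟙 _) := by
  simpa using hnat X X Y (X⟦(1 : ℤ)⟧) (𝟙 X) d (𝟙 _)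

lemma apply_id_naturality {X Y : S} (f : X ⟶ Y) :
    F.map (f⟦(1 : ℤ)⟧') ≫ β Y (Y⟦(1 : ℤ)⟧) (𝟙 _) =
      β X (X⟦(1 : ℤ)⟧) (𝟙 _) ≫ (F.map f)⟦(1 : ℤ)⟧' := by
  have h₁ := hnat Y Y (X⟦(1 : ℤ)⟧) (Y⟦(1 : ℤ)⟧) (𝟙 Y) (f⟦(1 : ℤ)⟧') (𝟙 _)
  have h₂ := hnat X Y (X⟦(1 : ℤ)⟧) (X⟦(1 : ℤ)⟧) f (𝟙 _) (𝟙 _)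
  simp only [CategoryTheory.Functor.map_id, comp_id, id_comp] at h₁ h₂
  rw [← h₁, h₂]

end Naturality

/-- An extriangulated functor `(F, β)` between triangulated categories (viewed as
extriangulated categories via `𝔼(Y, X) = Hom(Y, ΣX)`) induces a triangulated functor:
`τ_X := β(id_{ΣX}) : F(ΣX) → ΣF(X)` is a natural isomorphism and `F` sends exact
triangles `X → W → Y → ΣX` to exact triangles `F(X) → F(W) → F(Y) → ΣF(X)` with
connecting map `τ_X ∘ F(h)`. -/
theorem stmt_13 {S T : Type*} [Category S] [Category T]
    [Preadditive S] [Preadditive T] [HasZeroObject S] [HasZeroObject T]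
    [HasShift S ℤ] [HasShift T ℤ]
    [∀ n : ℤ, (CategoryTheory.shiftFunctor S n).Additive]
    [∀ n : ℤ, (CategoryTheory.shiftFunctor T n).Additive]
    [Pretriangulated S] [Pretriangulated T]
    (F : S ⥤ T) [F.Additive]
    (β : ∀ (X Y : S), (Y ⟶ X⟦(1 : ℤ)⟧) → (F.obj Y ⟶ (F.obj X)⟦(1 : ℤ)⟧))
    -- β is additive
    (hadd : ∀ (X Y : S) (d e : Y ⟶ X⟦(1 : ℤ)⟧), β X Y (d + e) = β X Y d + β X Y e)
    -- β is natural in both variables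
    (hnat : ∀ (X X' Y' Y : S) (f : X ⟶ X') (g : Y' ⟶ Y) (d : Y ⟶ X⟦(1 : ℤ)⟧),
      β X' Y' (g ≫ d ≫ f⟦(1 : ℤ)⟧') = F.map g ≫ β X Y d ≫ (F.map f)⟦(1 : ℤ)⟧')
    -- (F, β) sends extriangles to extriangles
    (htri : ∀ (X W Y : S) (f : X ⟶ W) (g : W ⟶ Y) (d : Y ⟶ X⟦(1 : ℤ)⟧),
      Triangle.mk f g d ∈ (distTriang S) →
        Triangle.mk (F.map f) (F.map g) (β X Y d) ∈ distTriang T) :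
    (∀ X : S, IsIso (β X (X⟦(1 : ℤ)⟧) (𝟙 (X⟦(1 : ℤ)⟧)))) ∧
    (∀ (X Y : S) (f : X ⟶ Y),
        F.map (f⟦(1 : ℤ)⟧') ≫ β Y (Y⟦(1 : ℤ)⟧) (𝟙 (Y⟦(1 : ℤ)⟧)) =
          β X (X⟦(1 : ℤ)⟧) (𝟙 (X⟦(1 : ℤ)⟧)) ≫ (F.map f)⟦(1 : ℤ)⟧') ∧
    (∀ (X W Y : S) (f : X ⟶ W) (g : W ⟶ Y) (d : Y ⟶ X⟦(1 : ℤ)⟧),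
        Triangle.mk f g d ∈ (distTriang S) →
          Triangle.mk (F.map f) (F.map g)
              (F.map d ≫ β X (X⟦(1 : ℤ)⟧) (𝟙 (X⟦(1 : ℤ)⟧))) ∈ distTriang T) := by
  refine ⟨fun X => ?_, fun X Y f => apply_id_naturality F β hnat f,
    fun X W Y f g d hT => ?_⟩
  · have hF := htri _ _ _ _ _ _ (contractible_distinguished₂ X)
    exact (Triangle.isZero₂_iff_isIso₃ _ hF).1 (F.map_isZero (isZero_zero S))
  · rw [← eq_map_comp_apply_id_of_naturality F β hnat d]
    exact htri X W Y f g d hT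
end

section
/- Let (F, β): A → B and (G, γ): B → A be extriangulated functors with F left adjoint to G, and suppose the unit η and counit ε of the adjunction are extriangulated natural transformations. Then for all Y ∈ A and X ∈ B, the maps 𝔽(F(Y), X) → 𝔼(Y, G(X)) given by d ↦ η_Y^*(γ_{F(Y),X}(d)) and 𝔼(Y, G(X)) → 𝔽(F(Y), X) given by e ↦ (ε_X)_*(β_{Y,G(X)}(e)) are mutually inverse; in particular 𝔽(F(Y), X) ≅ 𝔼(Y, G(X)). -/
open CategoryTheory

/-- Extriangulated adjunction: let `(F, β) : A → B` and `(G, γ) : B → A` be extriangulated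
functors with `F ⊣ G`, and suppose the unit `η` and counit `ε` are extriangulated natural
transformations. The bifunctors `𝔼` and `𝔽` are encoded by their values `EA`, `EB` together
with covariant pushforwards `pushA/pushB` and contravariant pullbacks `pullA/pullB`. Then
`d ↦ η_Y^*(γ(d))` and `e ↦ (ε_X)_*(β(e))` are mutually inverse maps between `𝔽(F Y, X)`
and `𝔼(Y, G X)`. -/
theorem stmt_14 {A B : Type*} [Category A] [Category B]
    (EA : A → A → Type*) (EB : B → B → Type*)
    -- bifunctor structure on 𝔼 = EA
    (pushA : ∀ {Y X X' : A}, (X ⟶ X') → EA Y X → EA Y X')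
    (pullA : ∀ {Y' Y X : A}, (Y' ⟶ Y) → EA Y X → EA Y' X)
    (pushA_id : ∀ {Y X : A} (d : EA Y X), pushA (𝟙 X) d = d)
    (pullA_id : ∀ {Y X : A} (d : EA Y X), pullA (𝟙 Y) d = d)
    (pushA_comp : ∀ {Y X X' X'' : A} (f : X ⟶ X') (f' : X' ⟶ X'') (d : EA Y X),
      pushA (f ≫ f') d = pushA f' (pushA f d))
    (pullA_comp : ∀ {Y'' Y' Y X : A} (g' : Y'' ⟶ Y') (g : Y' ⟶ Y) (d : EA Y X),
      pullA (g' ≫ g) d = pullA g' (pullA g d))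
    (pushA_pullA : ∀ {Y' Y X X' : A} (g : Y' ⟶ Y) (f : X ⟶ X') (d : EA Y X),
      pushA f (pullA g d) = pullA g (pushA f d))
    -- bifunctor structure on 𝔽 = EB
    (pushB : ∀ {Y X X' : B}, (X ⟶ X') → EB Y X → EB Y X')
    (pullB : ∀ {Y' Y X : B}, (Y' ⟶ Y) → EB Y X → EB Y' X)
    (pushB_id : ∀ {Y X : B} (d : EB Y X), pushB (𝟙 X) d = d)
    (pullB_id : ∀ {Y X : B} (d : EB Y X), pullB (𝟙 Y) d = d)
    (pushB_comp : ∀ {Y X X' X'' : B} (f : X ⟶ X') (f' : X' ⟶ X'') (d : EB Y X),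
      pushB (f ≫ f') d = pushB f' (pushB f d))
    (pullB_comp : ∀ {Y'' Y' Y X : B} (g' : Y'' ⟶ Y') (g : Y' ⟶ Y) (d : EB Y X),
      pullB (g' ≫ g) d = pullB g' (pullB g d))
    (pushB_pullB : ∀ {Y' Y X X' : B} (g : Y' ⟶ Y) (f : X ⟶ X') (d : EB Y X),
      pushB f (pullB g d) = pullB g (pushB f d))
    -- the adjoint pair of extriangulated functors
    (F : A ⥤ B) (G : B ⥤ A) (adj : F ⊣ G)
    (β : ∀ (Y X : A), EA Y X → EB (F.obj Y) (F.obj X))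
    (γ : ∀ (Y X : B), EB Y X → EA (G.obj Y) (G.obj X))
    -- naturality of β and γ
    (β_push : ∀ {Y X X' : A} (f : X ⟶ X') (d : EA Y X),
      β Y X' (pushA f d) = pushB (F.map f) (β Y X d))
    (β_pull : ∀ {Y' Y X : A} (g : Y' ⟶ Y) (d : EA Y X),
      β Y' X (pullA g d) = pullB (F.map g) (β Y X d))
    (γ_push : ∀ {Y X X' : B} (f : X ⟶ X') (d : EB Y X),
      γ Y X' (pushB f d) = pushA (G.map f) (γ Y X d))
    (γ_pull : ∀ {Y' Y X : B} (g : Y' ⟶ Y) (d : EB Y X),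
      γ Y' X (pullB g d) = pullA (G.map g) (γ Y X d))
    -- the unit is an extriangulated natural transformation
    (hunit : ∀ (Y X : A) (d : EA Y X),
      pushA (adj.unit.app X) d =
        pullA (adj.unit.app Y) (γ (F.obj Y) (F.obj X) (β Y X d)))
    -- the counit is an extriangulated natural transformation
    (hcounit : ∀ (Y X : B) (d : EB Y X),
      pushB (adj.counit.app X) (β (G.obj Y) (G.obj X) (γ Y X d)) =
        pullB (adj.counit.app Y) d)
    (Y : A) (X : B) :
    (∀ d : EB (F.obj Y) X,
        pushB (adj.counit.app X)
            (β Y (G.obj X) (pullA (adj.unit.app Y) (γ (F.obj Y) X d))) = d) ∧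
    (∀ e : EA Y (G.obj X),
        pullA (adj.unit.app Y)
            (γ (F.obj Y) X (pushB (adj.counit.app X) (β Y (G.obj X) e))) = e) := by
  constructor
  · intro d
    rw [β_pull, pushB_pullB]
    simp only [Functor.comp_obj]
    rw [hcounit, ← pullB_comp, adj.left_triangle_components, pullB_id]
  · intro e
    rw [γ_push, ← pushA_pullA]
    simp only [Functor.comp_obj]
    rw [← hunit, ← pushA_comp, adj.right_triangle_components]
    exact pushA_id e
end

section
/- Let (A, 𝔼, 𝔰, ⊗, 1) be a closed tensor extriangulated category in which every object is strongly dualisable. Then an object is 𝔼-projective if and only if it is 𝔼-injective. -/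
/-- In a closed tensor extriangulated category in which every object is strongly
dualisable, an object is `𝔼`-projective if and only if it is `𝔼`-injective.

Abstract setting, at the level of isomorphism classes of objects: the objects form a
commutative monoid `C` under `⊗` (with unit `1`), `dual X = X^∨`, `Hm` is the Hom
bifunctor and `E` is the bifunctor `𝔼` (with zero elements), `Tri U V W` records the
extriangles `U → V → W ⤳`.  The hypotheses encode: the long exact `Hom`–`𝔼` sequence
`Hom(T,V) → Hom(T,W) → 𝔼(T,U)` of an extriangle (maps `b`, `δ` and exactness), the
realization of every `𝔼`-class by an extriangle, vanishing of the connecting map when the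
third object is `𝔼`-projective, stability of extriangles under tensoring, the
extriangulated adjunctions `𝔼(Y ⊗ X, Z) ≅ 𝔼(Y, X^∨ ⊗ Z)` coming from the closed
structure and strong dualisability (`hom(X,Z) = X^∨ ⊗ Z`), the duality isomorphisms
`𝔼(Y, X) ≅ 𝔼(X^∨, Y^∨)`, biduality `(X^∨)^∨ = X`, and the adjunction isomorphisms
`Hom(X^∨, -) ≅ Hom(1, X ⊗ -)` and `𝔼(X^∨, -) ≅ 𝔼(1, X ⊗ -)` compatible with the
connecting maps. -/
theorem stmt_16 {C : Type*} [CommMonoid C] (dual : C → C)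
    (E : C → C → Type*) (Hm : C → C → Type*)
    [∀ Y X : C, Zero (E Y X)]
    (Tri : C → C → C → Prop)
    -- the Hom–𝔼 long exact sequence of an extriangle
    (b : ∀ {U V W : C}, Tri U V W → ∀ T : C, Hm T V → Hm T W)
    (δ : ∀ {U V W : C}, Tri U V W → ∀ T : C, Hm T W → E T U)
    (hexact : ∀ {U V W : C} (t : Tri U V W) (T : C) (h : Hm T W),
      δ t T h = 0 ↔ ∃ g : Hm T V, b t T g = h)
    -- realization: every 𝔼-class arises from an extriangle
    (hreal : ∀ (T U : C) (e : E T U), ∃ (V : C) (t : Tri U V T) (h : Hm T T), δ t T h = e)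
    -- the connecting map vanishes when the third object of the extriangle is projective
    (hδproj : ∀ {U V W : C} (t : Tri U V W), (∀ (Z : C) (e : E W Z), e = 0) →
      ∀ (T : C) (h : Hm T W), δ t T h = 0)
    -- extriangles are stable under tensoring
    (tri_tensor : ∀ (a : C) {U V W : C}, Tri U V W → Tri (a * U) (a * V) (a * W))
    -- biduality from strong dualisability
    (hdd : ∀ X : C, dual (dual X) = X)
    -- extriangulated adjunction 𝔼(Y ⊗ X, Z) ≅ 𝔼(Y, X^∨ ⊗ Z)
    (eadj : ∀ Y X Z : C, E (Y * X) Z ≃ E Y (dual X * Z))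
    (eadj_zero : ∀ Y X Z : C, eadj Y X Z 0 = 0)
    -- duality isomorphism 𝔼(Y, X) ≅ 𝔼(X^∨, Y^∨)
    (e2 : ∀ Y X : C, E Y X ≃ E (dual X) (dual Y))
    (e2_zero : ∀ Y X : C, e2 Y X 0 = 0)
    -- adjunction isomorphisms Hom(X^∨, -) ≅ Hom(1, X ⊗ -) and 𝔼(X^∨, -) ≅ 𝔼(1, X ⊗ -)
    (hmadj : ∀ X Z : C, Hm (dual X) Z ≃ Hm 1 (X * Z))
    (ψ : ∀ X Z : C, E (dual X) Z ≃ E 1 (X * Z))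
    (ψ_zero : ∀ X Z : C, ψ X Z 0 = 0)
    -- the adjunction isomorphisms are compatible with the connecting maps
    (hladder : ∀ {U V W : C} (t : Tri U V W) (X : C) (h : Hm (dual X) W),
      ψ X U (δ t (dual X) h) = δ (tri_tensor X t) 1 (hmadj X W h))
    (hladder_b : ∀ {U V W : C} (t : Tri U V W) (X : C) (g : Hm (dual X) V),
      hmadj X W (b t (dual X) g) = b (tri_tensor X t) 1 (hmadj X V g)) :
    ∀ X : C, (∀ (Z : C) (e : E X Z), e = 0) ↔ (∀ (Y : C) (e : E Y X), e = 0) := by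
  -- Step 1: if X is projective then dual X is projective
  have projdual : ∀ X : C, (∀ (Z : C) (e : E X Z), e = 0) →
      (∀ (Z : C) (e : E (dual X) Z), e = 0) := by
    intro X hP Z e
    obtain ⟨V, t, h, hδ⟩ := hreal (dual X) Z e
    have hWproj : ∀ (Z' : C) (e' : E (X * dual X) Z'), e' = 0 := by
      intro Z' e'
      have h1 : eadj X (dual X) Z' e' = 0 := hP _ (eadj X (dual X) Z' e')
      have h2 : eadj X (dual X) Z' e' = eadj X (dual X) Z' 0 := by
        rw [h1, eadj_zero]
      exact (eadj X (dual X) Z').injective h2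
    have h3 : δ (tri_tensor X t) 1 (hmadj X (dual X) h) = 0 :=
      hδproj (tri_tensor X t) hWproj 1 (hmadj X (dual X) h)
    have h4 : ψ X Z e = 0 := by
      rw [← hδ, hladder t X h, h3]
    have h5 : ψ X Z e = ψ X Z 0 := by rw [h4, ψ_zero]
    exact (ψ X Z).injective h5
  -- Step 2: X is injective iff dual X is projective
  have injdual : ∀ X : C, (∀ (Y : C) (e : E Y X), e = 0) ↔
      (∀ (Z : C) (e : E (dual X) Z), e = 0) := by
    intro X
    constructor
    · intro hI
      have key : ∀ (Z : C) (e' : E (dual X) (dual (dual Z))), e' = 0 := by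
        intro Z e'
        have h1 : (e2 (dual Z) X).symm e' = 0 := hI _ _
        have h2 : e' = e2 (dual Z) X 0 := by
          rw [← h1, Equiv.apply_symm_apply]
        rw [h2, e2_zero]
      intro Z e
      have key' := key Z
      rw [hdd Z] at key'
      exact key' e
    · intro hP Y e
      have h1 : e2 Y X e = 0 := hP _ _
      have h2 : e2 Y X e = e2 Y X 0 := by rw [h1, e2_zero]
      exact (e2 Y X).injective h2
  intro X
  constructor
  · intro hP
    exact (injdual X).mpr (projdual X hP)
  · intro hI
    have h1 : ∀ (Z : C) (e : E (dual X) Z), e = 0 := (injdual X).mp hI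
    have h2 := projdual (dual X) h1
    rw [hdd X] at h2
    exact h2
end
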